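/- arXiv:2111.11195 — 3 statements merged into one kernel-verified Lean document; each statement's English description precedes it below -/
import Mathlib

section
/- Let d ≥ 1 and α, β ∈ ℝ satisfy α + β > d. Then there is a constant C such that for all n ∈ ℤ^d, the sum over pairs (n₁, n₂) with n₁ + n₂ = n and |n₁| ∼ |n₂| (i.e. |n₁| ≤ 2|n₂| and |n₂| ≤ 2|n₁|) of ⟨n₁⟩^{-α} ⟨n₂⟩^{-β} is at most C ⟨n⟩^{d - α - β}. -/
/-!
Comparability `|n₁| ∼ |n₂|` gives `⟨n₂⟩ ≈ ⟨n₁⟩` and, by the triangle inequality, `⟨n₁⟩ ≥ ⟨n⟩ / 3`,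
so the sum is at most a constant times the tail `∑_{⟨m⟩ ≥ R} ⟨m⟩^{-s}` with `s = α + β > d` and
`R = ⟨n⟩ / 3`. Splitting the tail into dyadic shells `2^j ≤ ⟨m⟩ < 2^{j+1}`, each holding
`O(2^{jd})` lattice points, bounds it by a geometric series `∑_{2^{j+1} > R} 2^{j(d-s)} ≲ R^{d-s}`.
-/

open scoped BigOperators

/-- Japanese bracket `⟨m⟩ = (1 + |m|²)^(1/2)` of a lattice point `m ∈ ℤ^d`. -/
noncomputable def jbZ (d : ℕ) (m : Fin d → ℤ) : ℝ :=
  Real.sqrt (1 + ∑ i, ((m i : ℝ)) ^ 2)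

/-- Euclidean norm of a lattice point `m ∈ ℤ^d`. -/
noncomputable def enZ (d : ℕ) (m : Fin d → ℤ) : ℝ :=
  Real.sqrt (∑ i, ((m i : ℝ)) ^ 2)

open Finset

section JapaneseBracket

variable {d : ℕ}

lemma enZ_eq_norm (m : Fin d → ℤ) :
    enZ d m = ‖(WithLp.toLp 2 fun i => (m i : ℝ) : EuclideanSpace ℝ (Fin d))‖ := by
  simp only [enZ, EuclideanSpace.norm_eq, Real.norm_eq_abs, sq_abs]

lemma enZ_nonneg (m : Fin d → ℤ) : 0 ≤ enZ d m := Real.sqrt_nonneg _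

lemma enZ_add_le (a b : Fin d → ℤ) : enZ d (a + b) ≤ enZ d a + enZ d b := by
  simp only [enZ_eq_norm]
  convert norm_add_le (WithLp.toLp 2 fun i => (a i : ℝ) : EuclideanSpace ℝ (Fin d))
    (WithLp.toLp 2 fun i => (b i : ℝ)) using 1
  congr 1
  ext i
  simp

lemma jbZ_eq_sqrt_one_add_enZ_sq (m : Fin d → ℤ) : jbZ d m = √(1 + enZ d m ^ 2) := by
  rw [jbZ, enZ, Real.sq_sqrt (sum_nonneg fun i _ => sq_nonneg _)]

lemma one_le_jbZ (m : Fin d → ℤ) : 1 ≤ jbZ d m := by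
  rw [jbZ_eq_sqrt_one_add_enZ_sq, Real.one_le_sqrt]
  linarith [sq_nonneg (enZ d m)]

lemma jbZ_pos (m : Fin d → ℤ) : 0 < jbZ d m := one_pos.trans_le (one_le_jbZ m)

lemma abs_apply_le_jbZ (m : Fin d → ℤ) (i : Fin d) : |(m i : ℝ)| ≤ jbZ d m := by
  rw [jbZ, ← Real.sqrt_sq_eq_abs]
  refine Real.sqrt_le_sqrt ?_
  have := single_le_sum (f := fun j => ((m j : ℝ)) ^ 2) (fun j _ => sq_nonneg _) (mem_univ i)
  linarith

lemma jbZ_le_mul_of_enZ_le {a b : Fin d → ℤ} {c : ℝ} (hc : 1 ≤ c)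
    (h : enZ d a ≤ c * enZ d b) : jbZ d a ≤ c * jbZ d b := by
  rw [jbZ_eq_sqrt_one_add_enZ_sq, jbZ_eq_sqrt_one_add_enZ_sq,
    ← Real.sqrt_sq (by positivity : 0 ≤ c), ← Real.sqrt_mul (sq_nonneg c)]
  refine Real.sqrt_le_sqrt ?_
  have := pow_le_pow_left₀ (enZ_nonneg a) h 2
  nlinarith

lemma card_le_of_forall_jbZ_le (S : Finset (Fin d → ℤ)) (N : ℕ)
    (h : ∀ m ∈ S, jbZ d m ≤ N) : (#S : ℝ) ≤ (2 * N + 1) ^ d := by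
  have hsub : S ⊆ Fintype.piFinset fun _ => Icc (-N : ℤ) N := by
    intro m hm
    simp only [Fintype.mem_piFinset, mem_Icc, ← abs_le]
    exact fun i => by exact_mod_cast (abs_apply_le_jbZ m i).trans (h m hm)
  have hcard : #(Icc (-N : ℤ) N) = 2 * N + 1 := by
    rw [Int.card_Icc]; omega
  calc (#S : ℝ) ≤ #(Fintype.piFinset fun _ : Fin d => Icc (-N : ℤ) N) := by
        exact_mod_cast card_le_card hsub
    _ = (2 * N + 1) ^ d := by simp [hcard]

end JapaneseBracket

noncomputable def dyadicLevel (x : ℝ) : ℕ := Nat.log 2 ⌊x⌋₊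

lemma two_pow_dyadicLevel_le {x : ℝ} (hx : 1 ≤ x) : (2 : ℝ) ^ dyadicLevel x ≤ x := by
  have hfloor : ⌊x⌋₊ ≠ 0 := Nat.one_le_iff_ne_zero.mp ((Nat.one_le_floor_iff x).2 hx)
  calc (2 : ℝ) ^ dyadicLevel x ≤ ⌊x⌋₊ := by exact_mod_cast Nat.pow_log_le_self 2 hfloor
    _ ≤ x := Nat.floor_le (by linarith)

lemma lt_two_pow_dyadicLevel_succ (x : ℝ) : x < 2 ^ (dyadicLevel x + 1) :=
  calc x < ⌊x⌋₊ + 1 := Nat.lt_floor_add_one x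
    _ ≤ (2 : ℝ) ^ (dyadicLevel x + 1) := by
      exact_mod_cast Nat.lt_pow_succ_log_self one_lt_two ⌊x⌋₊

lemma dyadicLevel_mono : Monotone dyadicLevel :=
  fun _ _ h => Nat.log_mono_right (Nat.floor_le_floor h)

lemma rpow_neg_le_pow_dyadicLevel {s : ℝ} (hs : 0 ≤ s) {x : ℝ} (hx : 1 ≤ x) :
    x ^ (-s) ≤ ((2 : ℝ) ^ (-s)) ^ dyadicLevel x := by
  rw [← Real.rpow_mul_natCast zero_le_two, mul_comm, Real.rpow_natCast_mul zero_le_two]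
  exact Real.rpow_le_rpow_of_nonpos (by positivity) (two_pow_dyadicLevel_le hx) (by linarith)

lemma sum_jbZ_rpow_neg_le_of_dyadicLevel_eq {d : ℕ} {s : ℝ} (hs : 0 ≤ s)
    (S : Finset (Fin d → ℤ)) (j : ℕ) (h : ∀ m ∈ S, dyadicLevel (jbZ d m) = j) :
    ∑ m ∈ S, jbZ d m ^ (-s) ≤ 8 ^ d * ((2 : ℝ) ^ ((d : ℝ) - s)) ^ j := by
  have hterm : ∀ m ∈ S, jbZ d m ^ (-s) ≤ ((2 : ℝ) ^ (-s)) ^ j := fun m hm =>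
    h m hm ▸ rpow_neg_le_pow_dyadicLevel hs (one_le_jbZ m)
  have hcard : (#S : ℝ) ≤ 8 ^ d * ((2 : ℝ) ^ d) ^ j := by
    have hS := card_le_of_forall_jbZ_le S (2 ^ (j + 1)) fun m hm => by
      exact_mod_cast h m hm ▸ (lt_two_pow_dyadicLevel_succ (jbZ d m)).le
    refine hS.trans ?_
    rw [← pow_mul, mul_comm d, pow_mul, ← mul_pow]
    gcongr
    push_cast
    linarith [one_le_pow₀ (M₀ := ℝ) one_le_two (n := j), pow_succ (2 : ℝ) j]
  calc ∑ m ∈ S, jbZ d m ^ (-s) ≤ #S * ((2 : ℝ) ^ (-s)) ^ j := by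
        simpa using sum_le_card_nsmul S _ _ hterm
    _ ≤ 8 ^ d * ((2 : ℝ) ^ d) ^ j * ((2 : ℝ) ^ (-s)) ^ j := by gcongr
    _ = 8 ^ d * ((2 : ℝ) ^ ((d : ℝ) - s)) ^ j := by
        rw [mul_assoc, ← mul_pow, ← Real.rpow_natCast (2 : ℝ) d, ← Real.rpow_add zero_lt_two,
          sub_eq_add_neg]

theorem exists_sum_jbZ_rpow_neg_le_of_le_jbZ (d : ℕ) {s : ℝ} (hds : (d : ℝ) < s) :
    ∃ C > 0, ∀ R > 0, ∀ S : Finset (Fin d → ℤ), (∀ m ∈ S, R ≤ jbZ d m) →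
      ∑ m ∈ S, jbZ d m ^ (-s) ≤ C * R ^ ((d : ℝ) - s) := by
  set r : ℝ := 2 ^ ((d : ℝ) - s)
  have hr0 : 0 ≤ r := by positivity
  have hr1 : r < 1 := Real.rpow_lt_one_of_one_lt_of_neg one_lt_two (by linarith)
  refine ⟨8 ^ d * 2 ^ (s - d) / (1 - r), by positivity, fun R hR S hS => ?_⟩
  set J := dyadicLevel R
  set T := S.image fun m => dyadicLevel (jbZ d m)
  have hT : T ⊆ Ico J (T.sup id + 1) := by
    intro j hj
    obtain ⟨m, hm, rfl⟩ := mem_image.1 hj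
    exact mem_Ico.2 ⟨dyadicLevel_mono (hS m hm), Nat.lt_succ_of_le (le_sup (f := id) hj)⟩
  have hrJ : r ^ J ≤ 2 ^ (s - d) * R ^ ((d : ℝ) - s) := by
    have hRJ : R / 2 ≤ 2 ^ J := by
      linarith [lt_two_pow_dyadicLevel_succ R, pow_succ (2 : ℝ) J]
    calc r ^ J = ((2 : ℝ) ^ J) ^ ((d : ℝ) - s) := by
          rw [← Real.rpow_mul_natCast zero_le_two, mul_comm, Real.rpow_natCast_mul zero_le_two]
      _ ≤ (R / 2) ^ ((d : ℝ) - s) := Real.rpow_le_rpow_of_nonpos (by positivity) hRJ (by linarith)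
      _ = 2 ^ (s - d) * R ^ ((d : ℝ) - s) := by
          rw [Real.div_rpow hR.le zero_le_two, div_eq_mul_inv, ← Real.rpow_neg zero_le_two,
            neg_sub, mul_comm]
  calc ∑ m ∈ S, jbZ d m ^ (-s)
      = ∑ j ∈ T, ∑ m ∈ S with dyadicLevel (jbZ d m) = j, jbZ d m ^ (-s) :=
        (sum_fiberwise_of_maps_to (fun m hm => mem_image_of_mem _ hm) _).symm
    _ ≤ ∑ j ∈ T, 8 ^ d * r ^ j := sum_le_sum fun j _ =>
        sum_jbZ_rpow_neg_le_of_dyadicLevel_eq (by linarith [d.cast_nonneg (α := ℝ)]) _ j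
          fun m hm => (mem_filter.1 hm).2
    _ ≤ 8 ^ d * ∑ j ∈ Ico J (T.sup id + 1), r ^ j := by
        rw [← mul_sum]
        gcongr
    _ ≤ 8 ^ d * (r ^ J / (1 - r)) := by gcongr; exact geom_sum_Ico_le_of_lt_one hr0 hr1
    _ ≤ 8 ^ d * (2 ^ (s - d) * R ^ ((d : ℝ) - s) / (1 - r)) := by gcongr
    _ = 8 ^ d * 2 ^ (s - d) / (1 - r) * R ^ ((d : ℝ) - s) := by ring

lemma rpow_le_two_rpow_abs_mul_rpow {x y : ℝ} (hx : 0 < x) (hy : 0 < y) (hyx : y ≤ 2 * x)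
    (hxy : x ≤ 2 * y) (t : ℝ) : y ^ t ≤ 2 ^ |t| * x ^ t := by
  rcases le_or_gt 0 t with ht | ht
  · rw [abs_of_nonneg ht, ← Real.mul_rpow zero_le_two hx.le]
    exact Real.rpow_le_rpow hy.le hyx ht
  · calc y ^ t ≤ (x / 2) ^ t := Real.rpow_le_rpow_of_nonpos (by positivity) (by linarith) ht.le
      _ = 2 ^ |t| * x ^ t := by
        rw [abs_of_neg ht, Real.div_rpow hx.le zero_le_two, Real.rpow_neg zero_le_two,
          div_eq_mul_inv, mul_comm]

lemma jbZ_rpow_neg_mul_rpow_neg_le {d : ℕ} {a b : Fin d → ℤ} (hab : enZ d a ≤ 2 * enZ d b)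
    (hba : enZ d b ≤ 2 * enZ d a) (α β : ℝ) :
    jbZ d a ^ (-α) * jbZ d b ^ (-β) ≤ 2 ^ |β| * jbZ d a ^ (-(α + β)) := by
  have hb := rpow_le_two_rpow_abs_mul_rpow (jbZ_pos a) (jbZ_pos b)
    (jbZ_le_mul_of_enZ_le one_le_two hba) (jbZ_le_mul_of_enZ_le one_le_two hab) (-β)
  rw [abs_neg] at hb
  calc jbZ d a ^ (-α) * jbZ d b ^ (-β) ≤ jbZ d a ^ (-α) * (2 ^ |β| * jbZ d a ^ (-β)) :=
        mul_le_mul_of_nonneg_left hb (Real.rpow_nonneg (jbZ_pos a).le _)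
    _ = 2 ^ |β| * jbZ d a ^ (-(α + β)) := by
        rw [neg_add, Real.rpow_add (jbZ_pos a)]; ring

theorem stmt1_general (d : ℕ) (α β : ℝ) (hαβ : (d : ℝ) < α + β) :
    ∃ C > 0, ∀ n : Fin d → ℤ, ∀ S : Finset (Fin d → ℤ),
      (∀ n₁ ∈ S, enZ d n₁ ≤ 2 * enZ d (n - n₁) ∧ enZ d (n - n₁) ≤ 2 * enZ d n₁) →
      ∑ n₁ ∈ S, (jbZ d n₁) ^ (-α) * (jbZ d (n - n₁)) ^ (-β)
        ≤ C * (jbZ d n) ^ ((d : ℝ) - α - β) := by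
  obtain ⟨C, hC, htail⟩ := exists_sum_jbZ_rpow_neg_le_of_le_jbZ d hαβ
  refine ⟨2 ^ |β| * C * 3 ^ (α + β - d), by positivity, fun n S hS => ?_⟩
  have hfar : ∀ n₁ ∈ S, jbZ d n / 3 ≤ jbZ d n₁ := by
    intro n₁ hn₁
    have hn : enZ d n ≤ 3 * enZ d n₁ := by
      simpa using (enZ_add_le n₁ (n - n₁)).trans (by linarith [(hS n₁ hn₁).2])
    linarith [jbZ_le_mul_of_enZ_le (by norm_num) hn]
  calc ∑ n₁ ∈ S, jbZ d n₁ ^ (-α) * jbZ d (n - n₁) ^ (-β)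
      ≤ ∑ n₁ ∈ S, 2 ^ |β| * jbZ d n₁ ^ (-(α + β)) :=
        sum_le_sum fun n₁ hn₁ => jbZ_rpow_neg_mul_rpow_neg_le (hS n₁ hn₁).1 (hS n₁ hn₁).2 α β
    _ ≤ 2 ^ |β| * (C * (jbZ d n / 3) ^ ((d : ℝ) - (α + β))) := by
        rw [← mul_sum]
        gcongr
        exact htail _ (div_pos (jbZ_pos n) three_pos) S hfar
    _ = 2 ^ |β| * C * 3 ^ (α + β - d) * jbZ d n ^ ((d : ℝ) - α - β) := by
        rw [Real.div_rpow (jbZ_pos n).le zero_le_three, div_eq_mul_inv,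
          ← Real.rpow_neg zero_le_three, neg_sub, sub_sub]
        ring

/-- Resonant discrete convolution estimate: for `α + β > d`, the sum of
`⟨n₁⟩^{-α} ⟨n₂⟩^{-β}` over `n₁ + n₂ = n` with `|n₁| ∼ |n₂|` (comparable up to
a factor 2) is `≲ ⟨n⟩^{d-α-β}` (stated via arbitrary finite partial sums over
the constrained set). -/
theorem stmt1 (d : ℕ) (hd : 1 ≤ d) (α β : ℝ) (hαβ : (d : ℝ) < α + β) :
    ∃ C > 0, ∀ n : Fin d → ℤ, ∀ S : Finset (Fin d → ℤ),
      (∀ n₁ ∈ S, enZ d n₁ ≤ 2 * enZ d (n - n₁) ∧ enZ d (n - n₁) ≤ 2 * enZ d n₁) →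
      ∑ n₁ ∈ S, (jbZ d n₁) ^ (-α) * (jbZ d (n - n₁)) ^ (-β)
        ≤ C * (jbZ d n) ^ ((d : ℝ) - α - β) :=
  stmt1_general d α β hαβ
end

section
/- Let N₂^{1+γ} ≳ N₁ with 0 ≤ γ < 1, fix a ball J₁ of radius ∼ N₂ inside {|n₁| ∼ N₁} and a ball J₂ of radius ∼ N₂ inside {|n| ∼ N}, with N ∼ N₁ ≳ N₂. Then for each fixed n ∈ J₂, the set S_n = { n₁ ∈ J₁ : | |n₁|² ± |n − n₁| − |n|² | ≤ C N₂^{1+γ}, |n − n₁| ∼ N₂ } has cardinality at most C' N₂^{1+γ}. -/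
/-- Euclidean norm of a lattice point in `ℤ²`. -/
noncomputable def en2 (p : ℤ × ℤ) : ℝ :=
  Real.sqrt ((p.1 : ℝ) ^ 2 + (p.2 : ℝ) ^ 2)

lemma en2_sq (p : ℤ × ℤ) : en2 p ^ 2 = (p.1 : ℝ) ^ 2 + (p.2 : ℝ) ^ 2 :=
  Real.sq_sqrt (by positivity)

lemma en2_nonneg (p : ℤ × ℤ) : 0 ≤ en2 p := Real.sqrt_nonneg _

/-- integers in a real interval `[a,b]` number at most `b - a + 1` (or 1 if empty). -/
lemma card_le_of_mem_Icc (T : Finset ℤ) (a b : ℝ)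
    (h : ∀ y ∈ T, a ≤ (y : ℝ) ∧ (y : ℝ) ≤ b) :
    (T.card : ℝ) ≤ max (b - a + 1) 1 := by
  have hsub : T ⊆ Finset.Icc ⌈a⌉ ⌊b⌋ := by
    intro y hy
    rcases h y hy with ⟨h1, h2⟩
    exact Finset.mem_Icc.mpr ⟨Int.ceil_le.mpr h1, Int.le_floor.mpr h2⟩
  have hc := Finset.card_le_card hsub
  rcases le_or_gt ⌈a⌉ ⌊b⌋ with hle | hlt
  · have hcard : (Finset.Icc ⌈a⌉ ⌊b⌋).card = (⌊b⌋ + 1 - ⌈a⌉).toNat := Int.card_Icc _ _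
    have h1 : (((⌊b⌋ + 1 - ⌈a⌉).toNat : ℤ) : ℝ) = ((⌊b⌋ : ℝ) + 1 - (⌈a⌉ : ℝ)) := by
      rw [Int.toNat_of_nonneg (by omega)]; push_cast; ring
    have hb := Int.floor_le b
    have ha := Int.le_ceil a
    have : (T.card : ℝ) ≤ (⌊b⌋ : ℝ) + 1 - (⌈a⌉ : ℝ) := by
      rw [← h1]
      exact_mod_cast hc.trans_eq hcard
    have : (T.card : ℝ) ≤ b - a + 1 := by linarith
    exact this.trans (le_max_left _ _)
  · have : Finset.Icc ⌈a⌉ ⌊b⌋ = ∅ := Finset.Icc_eq_empty (by omega)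
    rw [this] at hc
    simp only [Finset.card_empty, Nat.le_zero] at hc
    rw [hc]
    simpa using le_max_right (b - a + 1) 1

/-- integers with `|y| ∈ [a,b]` number at most `2·max(b-a+1,1)`. -/
lemma card_le_of_abs_mem_Icc (T : Finset ℤ) (a b : ℝ)
    (h : ∀ y ∈ T, a ≤ |(y : ℝ)| ∧ |(y : ℝ)| ≤ b) :
    (T.card : ℝ) ≤ 2 * max (b - a + 1) 1 := by
  classical
  have hsplit := Finset.card_filter_add_card_filter_not (s := T)
    (p := fun y => 0 ≤ y)
  set T₁ := T.filter (fun y => 0 ≤ y) with hT₁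
  set T₂ := T.filter (fun y => ¬ 0 ≤ y) with hT₂
  have h1 : (T₁.card : ℝ) ≤ max (b - a + 1) 1 := by
    apply card_le_of_mem_Icc
    intro y hy
    obtain ⟨hyT, hy0⟩ := Finset.mem_filter.mp hy
    have habs : |(y : ℝ)| = (y : ℝ) := abs_of_nonneg (by exact_mod_cast hy0)
    have := h y hyT
    rw [habs] at this
    exact this
  have h2 : (T₂.card : ℝ) ≤ max (b - a + 1) 1 := by
    have himg : (T₂.image (fun y => -y)).card = T₂.card :=
      Finset.card_image_of_injective _ neg_injective
    rw [← himg]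
    apply card_le_of_mem_Icc
    intro y hy
    obtain ⟨z, hz, rfl⟩ := Finset.mem_image.mp hy
    obtain ⟨hzT, hz0⟩ := Finset.mem_filter.mp hz
    have hzlt : (z : ℝ) < 0 := by exact_mod_cast lt_of_not_ge hz0
    have habs : |(z : ℝ)| = -(z : ℝ) := abs_of_neg hzlt
    have := h z hzT
    rw [habs] at this
    constructor <;> push_cast <;> linarith [this.1, this.2]
  have : (T.card : ℝ) = (T₁.card : ℝ) + (T₂.card : ℝ) := by exact_mod_cast hsplit.symm
  linarith

lemma sqrt_sub_le_div (a b : ℝ) (ha : 0 < a) (hab : a ≤ b) :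
    Real.sqrt b - Real.sqrt a ≤ (b - a) / Real.sqrt a := by
  have hsa : 0 < Real.sqrt a := Real.sqrt_pos.mpr ha
  have hsq : Real.sqrt a ^ 2 = a := Real.sq_sqrt ha.le
  have hc : 0 ≤ Real.sqrt a + (b - a) / Real.sqrt a :=
    add_nonneg hsa.le (div_nonneg (by linarith) hsa.le)
  have hkey : b ≤ (Real.sqrt a + (b - a) / Real.sqrt a) ^ 2 := by
    have h3 : (b - a) / Real.sqrt a * Real.sqrt a = b - a := div_mul_cancel₀ _ hsa.ne'
    nlinarith [sq_nonneg ((b - a) / Real.sqrt a)]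
  have := Real.sqrt_le_sqrt hkey
  rw [Real.sqrt_sq hc] at this
  linarith

/-- Lattice points in the half-annulus `{A ≤ x²+y² ≤ B, x² ≤ y²}`. -/
lemma half_annulus_count (A B : ℝ) (hA : 0 < A) (hAB : A ≤ B) (T : Finset (ℤ × ℤ))
    (hT : ∀ p ∈ T, ((p.1 : ℝ)) ^ 2 ≤ ((p.2 : ℝ)) ^ 2 ∧
      A ≤ (p.1 : ℝ) ^ 2 + (p.2 : ℝ) ^ 2 ∧ (p.1 : ℝ) ^ 2 + (p.2 : ℝ) ^ 2 ≤ B) :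
    (T.card : ℝ) ≤ (2 * Real.sqrt B + 1) * (2 * ((B - A) / Real.sqrt (A / 2) + 1)) := by
  classical
  have hB0 : 0 ≤ B := le_trans hA.le hAB
  have hA2 : 0 < A / 2 := by linarith
  have hsA : 0 < Real.sqrt (A / 2) := Real.sqrt_pos.mpr hA2
  set U : ℝ := 2 * ((B - A) / Real.sqrt (A / 2) + 1) with hU
  have hU0 : 0 ≤ U := by
    have : 0 ≤ (B - A) / Real.sqrt (A / 2) := div_nonneg (by linarith) hsA.le
    positivity
  set m : ℤ := ⌊Real.sqrt B⌋ with hm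
  set X : Finset ℤ := Finset.Icc (-m) m with hX
  have hmemX : ∀ p ∈ T, p.1 ∈ X := by
    intro p hp
    obtain ⟨h1, h2, h3⟩ := hT p hp
    have hx2 : ((p.1 : ℝ)) ^ 2 ≤ B := by nlinarith [sq_nonneg ((p.2 : ℝ))]
    have habs : |(p.1 : ℝ)| ≤ Real.sqrt B := by
      rw [← Real.sqrt_sq_eq_abs]
      exact Real.sqrt_le_sqrt hx2
    rw [abs_le] at habs
    refine Finset.mem_Icc.mpr ⟨?_, Int.le_floor.mpr habs.2⟩
    have : -p.1 ≤ m := Int.le_floor.mpr (by push_cast; linarith [habs.1])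
    omega
  have hsum := Finset.card_eq_sum_card_fiberwise hmemX
  -- fiber bound
  have hfiber : ∀ x ∈ X, ((T.filter fun p => p.1 = x).card : ℝ) ≤ U := by
    intro x hx
    set F := T.filter fun p => p.1 = x with hF
    have himg : (F.image Prod.snd).card = F.card := by
      apply Finset.card_image_of_injOn
      intro p hp q hq hpq
      obtain ⟨_, hp2⟩ := Finset.mem_filter.mp hp
      obtain ⟨_, hq2⟩ := Finset.mem_filter.mp hq
      exact Prod.ext (hp2.trans hq2.symm) hpq
    set a' : ℝ := max (A - (x : ℝ) ^ 2) (A / 2) with ha'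
    have ha'pos : 0 < a' := lt_of_lt_of_le hA2 (le_max_right _ _)
    have hcount : ((F.image Prod.snd).card : ℝ) ≤
        2 * max (Real.sqrt (B - (x : ℝ) ^ 2) - Real.sqrt a' + 1) 1 := by
      apply card_le_of_abs_mem_Icc
      intro y hy
      obtain ⟨p, hp, rfl⟩ := Finset.mem_image.mp hy
      obtain ⟨hpT, hpx⟩ := Finset.mem_filter.mp hp
      obtain ⟨h1, h2, h3⟩ := hT p hpT
      rw [hpx] at h1 h2 h3
      have hy2lo : a' ≤ (p.2 : ℝ) ^ 2 := by
        apply max_le <;> nlinarith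
      have hy2hi : (p.2 : ℝ) ^ 2 ≤ B - (x : ℝ) ^ 2 := by linarith
      constructor
      · rw [← Real.sqrt_sq_eq_abs]
        exact Real.sqrt_le_sqrt hy2lo
      · rw [← Real.sqrt_sq_eq_abs]
        exact Real.sqrt_le_sqrt hy2hi
    have hmax : max (Real.sqrt (B - (x : ℝ) ^ 2) - Real.sqrt a' + 1) 1 ≤
        (B - A) / Real.sqrt (A / 2) + 1 := by
      have hrhs0 : 0 ≤ (B - A) / Real.sqrt (A / 2) := div_nonneg (by linarith) hsA.le
      apply max_le _ (by linarith)
      have hd : Real.sqrt (B - (x : ℝ) ^ 2) - Real.sqrt a' ≤ (B - A) / Real.sqrt (A / 2) := by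
        rcases le_or_gt a' (B - (x : ℝ) ^ 2) with hcase | hcase
        · have hstep := sqrt_sub_le_div a' (B - (x : ℝ) ^ 2) ha'pos hcase
          have hnum : B - (x : ℝ) ^ 2 - a' ≤ B - A := by
            have := le_max_left (A - (x : ℝ) ^ 2) (A / 2)
            linarith
          have hden : Real.sqrt (A / 2) ≤ Real.sqrt a' :=
            Real.sqrt_le_sqrt (le_max_right _ _)
          have h₁ : (B - (x : ℝ) ^ 2 - a') / Real.sqrt a' ≤ (B - A) / Real.sqrt (A / 2) :=
            div_le_div₀ (by linarith) hnum hsA hden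
          linarith
        · have : Real.sqrt (B - (x : ℝ) ^ 2) ≤ Real.sqrt a' := Real.sqrt_le_sqrt hcase.le
          linarith
      linarith
    calc (F.card : ℝ) = ((F.image Prod.snd).card : ℝ) := by exact_mod_cast himg.symm
      _ ≤ 2 * max (Real.sqrt (B - (x : ℝ) ^ 2) - Real.sqrt a' + 1) 1 := hcount
      _ ≤ U := by rw [hU]; linarith
  -- assemble
  have hXcard : (X.card : ℝ) ≤ 2 * Real.sqrt B + 1 := by
    have := card_le_of_mem_Icc X (-Real.sqrt B) (Real.sqrt B) ?_
    · have h2 : max (Real.sqrt B - -Real.sqrt B + 1) 1 = 2 * Real.sqrt B + 1 := by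
        rw [max_eq_left]; ring_nf
        nlinarith [Real.sqrt_nonneg B]
      rw [h2] at this; exact this
    · intro y hy
      obtain ⟨hy1, hy2⟩ := Finset.mem_Icc.mp hy
      have hmle : (m : ℝ) ≤ Real.sqrt B := Int.floor_le _
      constructor
      · have h' : ((-m : ℤ) : ℝ) ≤ (y : ℝ) := by exact_mod_cast hy1
        push_cast at h'
        linarith
      · have : (y : ℝ) ≤ (m : ℝ) := by exact_mod_cast hy2
        linarith
  calc (T.card : ℝ) = ∑ x ∈ X, ((T.filter fun p => p.1 = x).card : ℝ) := by
        rw [hsum]; push_cast; ring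
    _ ≤ ∑ x ∈ X, U := Finset.sum_le_sum hfiber
    _ = (X.card : ℝ) * U := by rw [Finset.sum_const, nsmul_eq_mul]
    _ ≤ (2 * Real.sqrt B + 1) * U := by
        apply mul_le_mul_of_nonneg_right hXcard hU0

lemma card_Icc_floor (c : ℝ) (hc : 0 ≤ c) :
    ((Finset.Icc (-⌊c⌋) ⌊c⌋).card : ℝ) ≤ 2 * c + 1 := by
  have h := card_le_of_mem_Icc (Finset.Icc (-⌊c⌋) ⌊c⌋) (-c) c ?_
  · have hmax : max (c - -c + 1) 1 = 2 * c + 1 := by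
      rw [max_eq_left (by linarith)]; ring
    rw [hmax] at h; exact h
  · intro y hy
    obtain ⟨hy1, hy2⟩ := Finset.mem_Icc.mp hy
    have hfl : (⌊c⌋ : ℝ) ≤ c := Int.floor_le _
    have h1 : ((-⌊c⌋ : ℤ) : ℝ) ≤ (y : ℝ) := by exact_mod_cast hy1
    have h2 : (y : ℝ) ≤ (⌊c⌋ : ℝ) := by exact_mod_cast hy2
    push_cast at h1
    exact ⟨by linarith, by linarith⟩

private lemma sq_le_imp_le (x c : ℝ) (hx : 0 ≤ x) (hc : 0 ≤ c) (h : x ^ 2 ≤ c ^ 2) :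
    x ≤ c := by nlinarith

private lemma one_le_of_two_le_sq (x : ℝ) (hx : 0 ≤ x) (h : 2 ≤ x ^ 2) : 1 ≤ x := by
  nlinarith

private lemma kcube (K : ℝ) (hK : 1 ≤ K) : K ≤ K ^ 3 := by
  nlinarith [mul_nonneg (mul_nonneg (by linarith : (0:ℝ) ≤ K)
    (by linarith : (0:ℝ) ≤ K - 1)) (by linarith : (0:ℝ) ≤ K + 1)]

private lemma numa (K P Mr : ℝ) (hK : 1 ≤ K) (hP : 1 ≤ P) (hMrB : Mr ≤ K ^ 6 * P ^ 2) :
    Mr + 2 * K * P ≤ (2 * K ^ 3 * P) ^ 2 := by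
  have hKP0 : (0:ℝ) ≤ K * P := mul_nonneg (by linarith) (by linarith)
  have hK5 : (1:ℝ) ≤ K ^ 5 * P := by
    have h5 := pow_le_pow_left₀ zero_le_one hK 5
    nlinarith
  have h6 : K * P ≤ (K * P) * (K ^ 5 * P) := le_mul_of_one_le_right hKP0 hK5
  nlinarith [h6]

private lemma nume (t sA Mr K P : ℝ) (h1 : Mr ≤ 3 * sA ^ 2)
    (h2 : t ^ 2 * sA ^ 2 = (4 * K * P) ^ 2) : t ^ 2 * Mr ≤ 48 * K ^ 2 * P ^ 2 := by
  nlinarith [mul_le_mul_of_nonneg_left h1 (sq_nonneg t)]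

private lemma numf (sB t Mr K P : ℝ) (hsBsq : sB ^ 2 ≤ (4 / 3) * Mr)
    (htMr : t ^ 2 * Mr ≤ 48 * K ^ 2 * P ^ 2) : (sB * t) ^ 2 ≤ (8 * K * P) ^ 2 := by
  nlinarith [mul_le_mul_of_nonneg_right hsBsq (sq_nonneg t)]

private lemma numd (K P sB t : ℝ) (hK : 1 ≤ K) (hP : 1 ≤ P)
    (hsBt : sB * t ≤ 8 * K * P) (hsB : sB ≤ 2 * K ^ 3 * P) (ht : t ≤ 4 * K * P) :
    (4 * (sB * t) + 4 * sB + 2 * t + 2) + (4 * (sB * t) + 4 * sB + 2 * t + 2)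
      ≤ 200 * K ^ 3 * P := by
  have h2 : K ≤ K ^ 3 := kcube K hK
  have h3 : K * P ≤ K ^ 3 * P :=
    mul_le_mul_of_nonneg_right h2 (by linarith)
  have h4 : 1 ≤ K ^ 3 * P := by nlinarith
  linarith

private lemma numc (K P r : ℝ) (hK : 1 ≤ K) (hP : 1 ≤ P) (hr1 : 1 ≤ r)
    (hr2 : r ^ 2 = 8 * K * P) : (2 * r + 1) * (2 * r + 1) ≤ 200 * K ^ 3 * P := by
  have h1 : r ≤ r ^ 2 := by nlinarith
  have h2 : K ≤ K ^ 3 := kcube K hK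
  have h3 : K * P ≤ K ^ 3 * P :=
    mul_le_mul_of_nonneg_right h2 (by linarith)
  have h4 : 1 ≤ K ^ 3 * P := by nlinarith
  nlinarith

set_option maxHeartbeats 1000000 in
/-- Counting estimate (third deterministic tensor estimate): with
`N₂^{1+γ} ≳ N₁`, `0 ≤ γ < 1`, balls `J₁ ⊆ {|n₁| ∼ N₁}` and `J₂ ⊆ {|n| ∼ N}` of
radius `∼ N₂`, `N ∼ N₁ ≳ N₂`, for fixed `n ∈ J₂` the set
`S_n = {n₁ ∈ J₁ : ||n₁|² ± |n−n₁| − |n|²| ≤ C N₂^{1+γ}, |n−n₁| ∼ N₂}` has at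
most `C' N₂^{1+γ}` elements. Comparability constants are encoded by `K`. -/
theorem stmt14 (K γ : ℝ) (hK : 1 ≤ K) (hγ0 : 0 ≤ γ) (hγ1 : γ < 1) :
    ∃ C > 0, ∀ (N N₁ N₂ sgn : ℝ) (z₁ z₂ n : ℤ × ℤ),
      sgn = 1 ∨ sgn = -1 →
      1 ≤ N₂ → N₂ ≤ N₁ → N₁ ≤ K * N₂ ^ (1 + γ) →
      N₁ / K ≤ N → N ≤ K * N₁ →
      en2 (n - z₂) ≤ K * N₂ → N / K ≤ en2 n → en2 n ≤ K * N →
      ∀ S : Finset (ℤ × ℤ),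
        (∀ n₁ ∈ S,
          en2 (n₁ - z₁) ≤ K * N₂ ∧
          N₁ / K ≤ en2 n₁ ∧ en2 n₁ ≤ K * N₁ ∧
          N₂ / K ≤ en2 (n - n₁) ∧ en2 (n - n₁) ≤ K * N₂ ∧
          |en2 n₁ ^ 2 + sgn * en2 (n - n₁) - en2 n ^ 2| ≤ K * N₂ ^ (1 + γ)) →
        (S.card : ℝ) ≤ C * N₂ ^ (1 + γ) := by
  have hK0 : (0 : ℝ) < K := lt_of_lt_of_le one_pos hK
  refine ⟨200 * K ^ 3, by positivity, ?_⟩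
  intro N N₁ N₂ sgn z₁ z₂ n hsgn hN₂ h12 h1P hNlo hNhi hball hnlo hnhi S hS
  classical
  set P : ℝ := N₂ ^ (1 + γ) with hPdef
  have hP2 : N₂ ≤ P := by
    calc N₂ = N₂ ^ (1 : ℝ) := (Real.rpow_one N₂).symm
      _ ≤ N₂ ^ (1 + γ) := Real.rpow_le_rpow_of_exponent_le hN₂ (by linarith)
  have hP1 : (1 : ℝ) ≤ P := le_trans hN₂ hP2
  have hKP1 : (1 : ℝ) ≤ K * P := by
    have := mul_le_mul hK hP1 zero_le_one hK0.le
    linarith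
  set Mr : ℝ := en2 n ^ 2 with hMrdef
  set A : ℝ := Mr - 2 * K * P with hAdef
  set B : ℝ := Mr + 2 * K * P with hBdef
  -- every point of S lies in the annulus A ≤ |p|² ≤ B
  have hann : ∀ p ∈ S, A ≤ (p.1 : ℝ) ^ 2 + (p.2 : ℝ) ^ 2 ∧
      (p.1 : ℝ) ^ 2 + (p.2 : ℝ) ^ 2 ≤ B := by
    intro p hp
    obtain ⟨_, _, _, _, hb5, hb6⟩ := hS p hp
    have he0 : 0 ≤ en2 (n - p) := en2_nonneg _
    have heP : en2 (n - p) ≤ K * P :=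
      le_trans hb5 (mul_le_mul_of_nonneg_left hP2 hK0.le)
    have habs := abs_le.mp hb6
    have hsgn' : |sgn * en2 (n - p)| ≤ K * P := by
      rcases hsgn with rfl | rfl
      · rw [one_mul, abs_of_nonneg he0]; exact heP
      · rw [neg_one_mul, abs_neg, abs_of_nonneg he0]; exact heP
    have h2 := abs_le.mp hsgn'
    have hsq := en2_sq p
    constructor
    · rw [hAdef, ← hsq]; linarith
    · rw [hBdef, ← hsq]; linarith
  -- size of Mr
  have hMrB : Mr ≤ K ^ 6 * P ^ 2 := by
    have h4 : 0 ≤ en2 n := en2_nonneg n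
    have h5 : en2 n ≤ K ^ 3 * P := by
      calc en2 n ≤ K * N := hnhi
        _ ≤ K * (K * N₁) := mul_le_mul_of_nonneg_left hNhi hK0.le
        _ ≤ K * (K * (K * P)) := by
            have := mul_le_mul_of_nonneg_left h1P hK0.le
            exact mul_le_mul_of_nonneg_left this hK0.le
        _ = K ^ 3 * P := by ring
    have h6 := pow_le_pow_left₀ h4 h5 2
    calc Mr = en2 n ^ 2 := hMrdef
      _ ≤ (K ^ 3 * P) ^ 2 := h6
      _ = K ^ 6 * P ^ 2 := by ring
  by_cases hM : 6 * K * P ≤ Mr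
  · -- big annulus case
    have hApos : 0 < A := by rw [hAdef]; linarith
    have hAB : A ≤ B := by rw [hAdef, hBdef]; linarith
    have hBA : B - A = 4 * K * P := by rw [hAdef, hBdef]; ring
    set S₁ := S.filter (fun p => p.1 ^ 2 ≤ p.2 ^ 2) with hS₁
    set S₂ := S.filter (fun p => ¬ p.1 ^ 2 ≤ p.2 ^ 2) with hS₂
    have hsplit : S₁.card + S₂.card = S.card :=
      Finset.card_filter_add_card_filter_not _
    set sA : ℝ := Real.sqrt (A / 2) with hsAdef
    set sB : ℝ := Real.sqrt B with hsBdef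
    have hbound1 : (S₁.card : ℝ) ≤ (2 * sB + 1) * (2 * ((B - A) / sA + 1)) := by
      apply half_annulus_count A B hApos hAB
      intro p hp
      obtain ⟨hpS, hple⟩ := Finset.mem_filter.mp hp
      refine ⟨?_, hann p hpS⟩
      exact_mod_cast hple
    have hbound2 : (S₂.card : ℝ) ≤ (2 * sB + 1) * (2 * ((B - A) / sA + 1)) := by
      have himg : (S₂.image Prod.swap).card = S₂.card :=
        Finset.card_image_of_injective _ Prod.swap_injective
      rw [← himg]
      apply half_annulus_count A B hApos hAB
      intro q hq
      obtain ⟨p, hp, rfl⟩ := Finset.mem_image.mp hq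
      obtain ⟨hpS, hple⟩ := Finset.mem_filter.mp hp
      have hle : p.2 ^ 2 ≤ p.1 ^ 2 := (lt_of_not_ge hple).le
      have h1 := hann p hpS
      refine ⟨by exact_mod_cast hle, by simpa [add_comm] using h1.1,
        by simpa [add_comm] using h1.2⟩
    -- numeric estimates
    have hA2pos : (0 : ℝ) < A / 2 := by linarith
    have hsA0 : 0 < sA := Real.sqrt_pos.mpr hA2pos
    have hsA2 : sA ^ 2 = A / 2 := Real.sq_sqrt hA2pos.le
    have hsB0 : 0 ≤ sB := Real.sqrt_nonneg _
    have hsB2 : sB ^ 2 = B := Real.sq_sqrt (by linarith)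
    set t : ℝ := (B - A) / sA with htdef
    have htsA : t * sA = B - A := div_mul_cancel₀ _ hsA0.ne'
    have ht0 : 0 ≤ t := div_nonneg (by linarith) hsA0.le
    have hsA1 : 1 ≤ sA := by
      apply one_le_of_two_le_sq sA hsA0.le
      rw [hsA2, hAdef]; linarith
    have ht : t ≤ 4 * K * P := by
      rw [htdef, hBA]; exact div_le_self (by positivity) hsA1
    have hsAMr : Mr ≤ 3 * sA ^ 2 := by rw [hsA2, hAdef]; linarith
    have htMr : t ^ 2 * Mr ≤ 48 * K ^ 2 * P ^ 2 := by
      apply nume t sA Mr K P hsAMr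
      rw [← mul_pow, htsA, hBA]
    have hsBsq : sB ^ 2 ≤ (4 / 3) * Mr := by rw [hsB2, hBdef]; linarith
    have hsBt : sB * t ≤ 8 * K * P := by
      apply sq_le_imp_le _ _ (mul_nonneg hsB0 ht0) (by positivity)
      exact numf sB t Mr K P hsBsq htMr
    have hsB3 : sB ≤ 2 * K ^ 3 * P := by
      apply sq_le_imp_le _ _ hsB0 (by positivity)
      rw [hsB2, hBdef]
      exact numa K P Mr hK hP1 hMrB
    have hcards : (S.card : ℝ) = (S₁.card : ℝ) + (S₂.card : ℝ) := by
      exact_mod_cast hsplit.symm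
    rw [hcards]
    have hexp : (2 * sB + 1) * (2 * ((B - A) / sA + 1))
        = 4 * (sB * t) + 4 * sB + 2 * t + 2 := by
      rw [← htdef]; ring
    rw [hexp] at hbound1 hbound2
    have := numd K P sB t hK hP1 hsBt hsB3 ht
    linarith
  · -- small ball case
    push_neg at hM
    have hBlt : B < 8 * K * P := by rw [hBdef]; linarith
    set r : ℝ := Real.sqrt (8 * K * P) with hrdef
    have hr2 : r ^ 2 = 8 * K * P := Real.sq_sqrt (by positivity)
    have hr1 : 1 ≤ r := by
      apply one_le_of_two_le_sq r (Real.sqrt_nonneg _)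
      rw [hr2]; linarith
    set m : ℤ := ⌊r⌋ with hm
    set X : Finset ℤ := Finset.Icc (-m) m with hX
    have hsub : S ⊆ X ×ˢ X := by
      intro p hp
      obtain ⟨h1, h2⟩ := hann p hp
      have hx : (p.1 : ℝ) ^ 2 ≤ 8 * K * P := by
        have := sq_nonneg ((p.2 : ℝ)); linarith
      have hy : (p.2 : ℝ) ^ 2 ≤ 8 * K * P := by
        have := sq_nonneg ((p.1 : ℝ)); linarith
      have hmemx : p.1 ∈ X := by
        have habs : |(p.1 : ℝ)| ≤ r := by
          rw [← Real.sqrt_sq_eq_abs]; exact Real.sqrt_le_sqrt hx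
        rw [abs_le] at habs
        refine Finset.mem_Icc.mpr ⟨?_, Int.le_floor.mpr habs.2⟩
        have : -p.1 ≤ m := Int.le_floor.mpr (by push_cast; linarith [habs.1])
        omega
      have hmemy : p.2 ∈ X := by
        have habs : |(p.2 : ℝ)| ≤ r := by
          rw [← Real.sqrt_sq_eq_abs]; exact Real.sqrt_le_sqrt hy
        rw [abs_le] at habs
        refine Finset.mem_Icc.mpr ⟨?_, Int.le_floor.mpr habs.2⟩
        have : -p.2 ≤ m := Int.le_floor.mpr (by push_cast; linarith [habs.1])
        omega
      exact Finset.mem_product.mpr ⟨hmemx, hmemy⟩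
    have hcard : S.card ≤ X.card * X.card := by
      have := Finset.card_le_card hsub
      rwa [Finset.card_product] at this
    have hXc : (X.card : ℝ) ≤ 2 * r + 1 := card_Icc_floor r (by linarith)
    have hX0 : (0 : ℝ) ≤ (X.card : ℝ) := Nat.cast_nonneg _
    have h1 : (S.card : ℝ) ≤ (2 * r + 1) * (2 * r + 1) := by
      calc (S.card : ℝ) ≤ (X.card : ℝ) * (X.card : ℝ) := by exact_mod_cast hcard
        _ ≤ (2 * r + 1) * (2 * r + 1) :=
          mul_le_mul hXc hXc hX0 (by linarith)
    calc (S.card : ℝ) ≤ (2 * r + 1) * (2 * r + 1) := h1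
      _ ≤ 200 * K ^ 3 * P := numc K P r hK hP1 hr1 hr2
end

section
/- Let h(n, n₁, n₂) = 1_{n₁ = n₂ − n} · 1_{|φ(n₁,n₂,n)| ≤ C N₁^{2s+2γ}} · ⟨n₁⟩^{-1} · 1_{|n| ∼ N} · 1_{|n₁| ∼ N₁} · 1_{|n₂| ∼ N₂}, where φ(n₁, n₂, n) = |n₁|² ± |n₂| − |n|², with N₁ ∼ N ≫ N₂ and 2s + 2γ < 1, s, γ ≥ 0. Then the norm of h viewed as an operator from ℓ²_{n₁, n} to ℓ²_{n₂} satisfies ‖h‖_{n₁ n → n₂} ≤ C (N₁^{s+γ−1/2+ε} N₂^{-1/2} + N₁^{-1/2+ε}) for any ε > 0. -/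
open scoped BigOperators

/-- Japanese bracket `⟨n⟩` for `n ∈ ℤ²`. -/
noncomputable def jb2 (n : ℤ × ℤ) : ℝ :=
  Real.sqrt (1 + (n.1 : ℝ) ^ 2 + (n.2 : ℝ) ^ 2)

/-- The phase `φ(n₁,n₂,n) = |n₁|² ± |n₂| − |n|²` (sign given by `sgn`). -/
noncomputable def phaseFn (sgn : ℝ) (n₁ n₂ n : ℤ × ℤ) : ℝ :=
  en2 n₁ ^ 2 + sgn * en2 n₂ - en2 n ^ 2

/-! Schur's test. The input `(n₁, n)` feeds only the output `n₂ = n₁ + n`, and every entry is at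
most `⟨n₁⟩⁻¹ ≲ 1 / N₁`. For fixed `n₂` the phase `φ(n₁, n₂, n₂ - n₁) = 2 n₁·n₂ - |n₂|² ± |n₂|` is
affine in `n₁`, so `|φ| ≲ N₁^{2s+2γ}` confines `n₁` to a slab of width `≲ N₁^{2s+2γ} / N₂`
orthogonal to `n₂`; within `|n₁| ≲ N₁` it holds `≲ N₁ (N₁^{2s+2γ} / N₂ + 1)` lattice points.
Hence `‖h‖² ≲ N₁⁻² · N₁ (N₁^{2s+2γ} / N₂ + 1) = N₁^{2s+2γ-1} / N₂ + N₁⁻¹`. -/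

open Finset

theorem Int.card_finset_le_of_abs_sub_le (T : Finset ℤ) {D : ℝ} (hD : 0 ≤ D)
    (hT : ∀ x ∈ T, ∀ y ∈ T, |(x : ℝ) - y| ≤ D) : (#T : ℝ) ≤ D + 1 := by
  rcases T.eq_empty_or_nonempty with rfl | hne
  · simp only [card_empty, CharP.cast_eq_zero]; linarith
  set x₀ := T.min' hne
  have hsub : T ⊆ Icc x₀ (x₀ + ⌊D⌋) := fun x hx => by
    have hle : (x : ℝ) - x₀ ≤ D := (abs_le.1 (hT x hx x₀ (T.min'_mem hne))).2
    have : x - x₀ ≤ ⌊D⌋ := Int.le_floor.2 (by push_cast; exact hle)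
    exact mem_Icc.2 ⟨T.min'_le x hx, by omega⟩
  calc (#T : ℝ) ≤ #(Icc x₀ (x₀ + ⌊D⌋)) := by exact_mod_cast card_le_card hsub
    _ = ⌊D⌋ + 1 := by
        rw [Int.card_Icc, show x₀ + ⌊D⌋ + 1 - x₀ = ⌊D⌋ + 1 by ring]
        exact_mod_cast Int.toNat_of_nonneg (by linarith [Int.floor_nonneg.2 hD])
    _ ≤ D + 1 := by linarith [Int.floor_le D]

/-- Each horizontal line meets the strip `|a x + b y - c| ≤ L` in an interval of length
`2L / |a|`. -/
theorem card_le_of_abs_linear_le (S : Finset (ℤ × ℤ)) {a b : ℤ} {c B L : ℝ} (ha : a ≠ 0)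
    (hB : 0 ≤ B) (hL : 0 ≤ L)
    (hS : ∀ q ∈ S, |(q.2 : ℝ)| ≤ B ∧ |(a : ℝ) * q.1 + b * q.2 - c| ≤ L) :
    (#S : ℝ) ≤ (2 * B + 1) * (2 * L / |(a : ℝ)| + 1) := by
  classical
  have ha' : (0 : ℝ) < |(a : ℝ)| := by positivity
  have hfiber : ∀ y ∈ S.image Prod.snd, (#{q ∈ S | q.2 = y} : ℝ) ≤ 2 * L / |(a : ℝ)| + 1 := by
    intro y _
    have hinj : Set.InjOn Prod.fst (({q ∈ S | q.2 = y} : Finset (ℤ × ℤ)) : Set (ℤ × ℤ)) :=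
      fun p hp q hq hpq =>
        Prod.ext hpq ((mem_filter.1 (mem_coe.1 hp)).2.trans (mem_filter.1 (mem_coe.1 hq)).2.symm)
    rw [← card_image_of_injOn hinj]
    refine Int.card_finset_le_of_abs_sub_le _ (by positivity) ?_
    simp only [mem_image, mem_filter]
    rintro _ ⟨p, ⟨hp, rfl⟩, rfl⟩ _ ⟨q, ⟨hq, hqy⟩, rfl⟩
    rw [le_div_iff₀ ha', ← abs_mul, mul_comm]
    have hp := (hS p hp).2
    have hq := (hS q hq).2
    rw [hqy] at hq
    calc |(a : ℝ) * (p.1 - q.1)|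
        = |((a : ℝ) * p.1 + b * p.2 - c) - ((a : ℝ) * q.1 + b * p.2 - c)| := by ring_nf
      _ ≤ 2 * L := by
          linarith [abs_sub ((a : ℝ) * p.1 + b * p.2 - c) ((a : ℝ) * q.1 + b * p.2 - c)]
  have hbase : (#(S.image Prod.snd) : ℝ) ≤ 2 * B + 1 := by
    refine Int.card_finset_le_of_abs_sub_le _ (by positivity) ?_
    simp only [mem_image]
    rintro _ ⟨p, hp, rfl⟩ _ ⟨q, hq, rfl⟩
    linarith [abs_sub (p.2 : ℝ) q.2, (hS p hp).1, (hS q hq).1]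
  calc (#S : ℝ) = ∑ y ∈ S.image Prod.snd, (#{q ∈ S | q.2 = y} : ℝ) := by
        exact_mod_cast card_eq_sum_card_image Prod.snd S
    _ ≤ #(S.image Prod.snd) * (2 * L / |(a : ℝ)| + 1) := by
        rw [← nsmul_eq_mul, ← sum_const]; exact sum_le_sum hfiber
    _ ≤ (2 * B + 1) * (2 * L / |(a : ℝ)| + 1) := by gcongr

theorem en2_sq_s16 (q : ℤ × ℤ) : en2 q ^ 2 = (q.1 : ℝ) ^ 2 + (q.2 : ℝ) ^ 2 :=
  Real.sq_sqrt (by positivity)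

theorem abs_snd_le_en2 (q : ℤ × ℤ) : |(q.2 : ℝ)| ≤ en2 q := by
  rw [← Real.sqrt_sq_eq_abs]
  exact Real.sqrt_le_sqrt (by nlinarith)

theorem en2_swap (q : ℤ × ℤ) : en2 q.swap = en2 q := by
  simp only [en2, Prod.fst_swap, Prod.snd_swap, add_comm]

theorem en2_le_two_mul_abs_fst {q : ℤ × ℤ} (h : |(q.2 : ℝ)| ≤ |(q.1 : ℝ)|) :
    en2 q ≤ 2 * |(q.1 : ℝ)| := by
  rw [← abs_two, ← abs_mul, ← Real.sqrt_sq_eq_abs]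
  exact Real.sqrt_le_sqrt (by nlinarith [sq_abs (q.1 : ℝ), sq_abs (q.2 : ℝ), abs_nonneg (q.2 : ℝ)])

theorem en2_le_jb2 (q : ℤ × ℤ) : en2 q ≤ jb2 q :=
  Real.sqrt_le_sqrt (by linarith)

theorem card_le_of_abs_dot_sub_le_of_abs_le (S : Finset (ℤ × ℤ)) {v : ℤ × ℤ} {c R L m : ℝ}
    (hm : 0 < m) (hv : m ≤ en2 v) (hR : 0 ≤ R) (hL : 0 ≤ L) (hvc : |(v.2 : ℝ)| ≤ |(v.1 : ℝ)|)
    (hS : ∀ q ∈ S, en2 q ≤ R ∧ |(v.1 : ℝ) * q.1 + v.2 * q.2 - c| ≤ L) :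
    (#S : ℝ) ≤ (2 * R + 1) * (4 * L / m + 1) := by
  have hv₁ : m ≤ 2 * |(v.1 : ℝ)| := hv.trans (en2_le_two_mul_abs_fst hvc)
  have hv₁' : v.1 ≠ 0 := by
    rintro h; rw [h, Int.cast_zero, abs_zero, mul_zero] at hv₁; linarith
  refine (card_le_of_abs_linear_le S hv₁' hR hL fun q hq =>
    ⟨(abs_snd_le_en2 q).trans (hS q hq).1, (hS q hq).2⟩).trans ?_
  have hslab : 2 * L / |(v.1 : ℝ)| ≤ 4 * L / m := by
    rw [div_le_div_iff₀ (by positivity) hm]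
    nlinarith
  gcongr

theorem card_le_of_abs_dot_sub_le (S : Finset (ℤ × ℤ)) {v : ℤ × ℤ} {c R L m : ℝ}
    (hm : 0 < m) (hv : m ≤ en2 v) (hR : 0 ≤ R) (hL : 0 ≤ L)
    (hS : ∀ q ∈ S, en2 q ≤ R ∧ |(v.1 : ℝ) * q.1 + v.2 * q.2 - c| ≤ L) :
    (#S : ℝ) ≤ (2 * R + 1) * (4 * L / m + 1) := by
  rcases le_total |(v.2 : ℝ)| |(v.1 : ℝ)| with hvc | hvc
  · exact card_le_of_abs_dot_sub_le_of_abs_le S hm hv hR hL hvc hS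
  · rw [← card_map ⟨Prod.swap, Prod.swap_injective⟩]
    refine card_le_of_abs_dot_sub_le_of_abs_le _ hm (v := v.swap) (c := c) (by rwa [en2_swap])
      hR hL hvc ?_
    simp only [mem_map, Function.Embedding.coeFn_mk]
    rintro _ ⟨q, hq, rfl⟩
    simpa only [en2_swap, Prod.fst_swap, Prod.snd_swap, add_comm] using hS q hq

theorem phaseFn_sub (sgn : ℝ) (n₁ n₂ : ℤ × ℤ) :
    phaseFn sgn n₁ n₂ (n₂ - n₁) =
      2 * ((n₂.1 : ℝ) * n₁.1 + n₂.2 * n₁.2 - (en2 n₂ ^ 2 - sgn * en2 n₂) / 2) := by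
  simp only [phaseFn, en2_sq_s16, Prod.fst_sub, Prod.snd_sub, Int.cast_sub]
  ring

theorem card_le_of_abs_phaseFn_le (s : Finset ((ℤ × ℤ) × (ℤ × ℤ))) (n₂ : ℤ × ℤ)
    {sgn R L m : ℝ} (hm : 0 < m) (hR : 0 ≤ R) (hL : 0 ≤ L)
    (hs : ∀ p ∈ s, p.1 = n₂ - p.2 ∧ en2 p.1 ≤ R ∧ |phaseFn sgn p.1 n₂ p.2| ≤ L ∧ m ≤ en2 n₂) :
    (#s : ℝ) ≤ (2 * R + 1) * (2 * L / m + 1) := by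
  rcases s.eq_empty_or_nonempty with rfl | ⟨p₀, hp₀⟩
  · simp only [card_empty, CharP.cast_eq_zero]; positivity
  have hsnd : ∀ p ∈ s, p.2 = n₂ - p.1 := fun p hp => by rw [(hs p hp).1, sub_sub_cancel]
  have hinj : Set.InjOn Prod.fst (s : Set ((ℤ × ℤ) × (ℤ × ℤ))) := fun p hp q hq hpq =>
    Prod.ext hpq (by rw [hsnd p hp, hsnd q hq, hpq])
  rw [← card_image_of_injOn hinj]
  convert card_le_of_abs_dot_sub_le _ hm (hs p₀ hp₀).2.2.2 hR (L := L / 2) (by positivity)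
    (c := (en2 n₂ ^ 2 - sgn * en2 n₂) / 2) ?_ using 3
  · ring
  rintro _ hq
  obtain ⟨p, hp, rfl⟩ := mem_image.1 hq
  obtain ⟨-, hR', hL', -⟩ := hs p hp
  rw [hsnd p hp, phaseFn_sub, abs_mul, abs_two] at hL'
  exact ⟨hR', by linarith⟩

theorem sum_sum_filter_le {ι κ : Type*} (s : Finset ι) (T : Finset κ) (P : κ → ι → Prop)
    [∀ k i, Decidable (P k i)] (g : ι → ℝ) (hg : ∀ i, 0 ≤ g i)
    (hP : ∀ i k k', P k i → P k' i → k = k') :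
    ∑ k ∈ T, ∑ i ∈ s with P k i, g i ≤ ∑ i ∈ s, g i := by
  simp_rw [sum_filter]
  rw [sum_comm]
  refine sum_le_sum fun i _ => ?_
  rw [← sum_filter, sum_const, nsmul_eq_mul]
  exact mul_le_of_le_one_left (hg i) <| by
    exact_mod_cast card_le_one.2 fun k hk k' hk' =>
      hP i k k' (mem_filter.1 hk).2 (mem_filter.1 hk').2

/-- Schur's test for a matrix whose columns have at most one nonzero entry. -/
theorem sum_norm_sq_sum_mul_le {ι κ 𝕜 : Type*} [SeminormedRing 𝕜] [DecidableEq 𝕜]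
    (A : κ → ι → 𝕜) (f : ι → 𝕜) (s : Finset ι) (T : Finset κ) {a R : ℝ} (hR : 0 ≤ R)
    (hA : ∀ k i, ‖A k i‖ ≤ a) (hrow : ∀ k, (#{i ∈ s | A k i ≠ 0} : ℝ) ≤ R)
    (hcol : ∀ i k k', A k i ≠ 0 → A k' i ≠ 0 → k = k') :
    ∑ k ∈ T, ‖∑ i ∈ s, A k i * f i‖ ^ 2 ≤ a ^ 2 * R * ∑ i ∈ s, ‖f i‖ ^ 2 := by
  have hrow_sum : ∀ k, ‖∑ i ∈ s, A k i * f i‖ ^ 2 ≤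
      a ^ 2 * R * ∑ i ∈ s with A k i ≠ 0, ‖f i‖ ^ 2 := fun k => by
    rw [← sum_filter_of_ne fun i _ h => left_ne_zero_of_mul h]
    calc ‖∑ i ∈ s with A k i ≠ 0, A k i * f i‖ ^ 2
        ≤ (∑ i ∈ s with A k i ≠ 0, a * ‖f i‖) ^ 2 := by
          gcongr
          refine (norm_sum_le _ _).trans (sum_le_sum fun i _ => ?_)
          exact (norm_mul_le _ _).trans (by gcongr; exact hA k i)
      _ = a ^ 2 * (∑ i ∈ s with A k i ≠ 0, ‖f i‖) ^ 2 := by rw [← mul_sum, mul_pow]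
      _ ≤ a ^ 2 * (#{i ∈ s | A k i ≠ 0} * ∑ i ∈ s with A k i ≠ 0, ‖f i‖ ^ 2) := by
          gcongr; exact sq_sum_le_card_mul_sum_sq
      _ ≤ a ^ 2 * R * ∑ i ∈ s with A k i ≠ 0, ‖f i‖ ^ 2 := by
          rw [mul_assoc]; gcongr; exact hrow k
  calc ∑ k ∈ T, ‖∑ i ∈ s, A k i * f i‖ ^ 2
      ≤ a ^ 2 * R * ∑ k ∈ T, ∑ i ∈ s with A k i ≠ 0, ‖f i‖ ^ 2 := by
        rw [mul_sum]; exact sum_le_sum fun k _ => hrow_sum k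
    _ ≤ a ^ 2 * R * ∑ i ∈ s, ‖f i‖ ^ 2 := by
        gcongr
        exact sum_sum_filter_le s T _ _ (fun i => by positivity) hcol

theorem rpow_two_mul_sq {x : ℝ} (hx : 0 < x) (b : ℝ) : (x ^ b) ^ 2 = x ^ (2 * b) := by
  rw [← Real.rpow_natCast, ← Real.rpow_mul hx.le, mul_comm]; norm_num

theorem entry_sq_mul_row_count_le {K N₁ N₂ s γ ε : ℝ} (hK : 1 ≤ K) (hN₁ : 1 ≤ N₁)
    (hN₂ : 0 < N₂) (hε : 0 ≤ ε) :
    (K / N₁) ^ 2 * ((2 * (K * N₁) + 1) * (2 * (K * N₁ ^ (2 * s + 2 * γ)) / (N₂ / K) + 1)) ≤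
      (√(6 * K ^ 5) * (N₁ ^ (s + γ - 1 / 2 + ε) * N₂ ^ (-(1 : ℝ) / 2) +
        N₁ ^ (-(1 : ℝ) / 2 + ε))) ^ 2 := by
  have hN₁' : 0 < N₁ := by linarith
  set X := N₁ ^ (2 * s + 2 * γ)
  set u := N₁ ^ (s + γ - 1 / 2 + ε) * N₂ ^ (-(1 : ℝ) / 2)
  set w := N₁ ^ (-(1 : ℝ) / 2 + ε)
  have hX : X / N₁ / N₂ ≤ u ^ 2 := by
    rw [mul_pow, rpow_two_mul_sq hN₁', rpow_two_mul_sq hN₂,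
      show 2 * (-(1 : ℝ) / 2) = -1 by norm_num, Real.rpow_neg_one, div_eq_mul_inv (X / N₁)]
    gcongr
    rw [div_eq_mul_inv, ← Real.rpow_neg_one, ← Real.rpow_add hN₁']
    exact Real.rpow_le_rpow_of_exponent_le hN₁ (by linarith)
  have hw : 1 / N₁ ≤ w ^ 2 := by
    rw [rpow_two_mul_sq hN₁', one_div, ← Real.rpow_neg_one]
    exact Real.rpow_le_rpow_of_exponent_le hN₁ (by linarith)
  have hX0 : 0 ≤ X := by positivity
  have hu : 0 ≤ u := by positivity
  have hw' : 0 ≤ w := by positivity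
  clear_value X u w
  calc (K / N₁) ^ 2 * ((2 * (K * N₁) + 1) * (2 * (K * X) / (N₂ / K) + 1))
      ≤ (K / N₁) ^ 2 * ((3 * (K * N₁)) * (2 * (K * X) / (N₂ / K) + 1)) := by
        gcongr; nlinarith
    _ = 6 * K ^ 5 * (X / N₁ / N₂) + 3 * K ^ 3 * (1 / N₁) := by
        field_simp; ring
    _ ≤ 6 * K ^ 5 * (u ^ 2 + w ^ 2) := by
        have h₁ : 6 * K ^ 5 * (X / N₁ / N₂) ≤ 6 * K ^ 5 * u ^ 2 := by gcongr
        have h₂ : 3 * K ^ 3 * (1 / N₁) ≤ 3 * K ^ 5 * w ^ 2 := by gcongr; norm_num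
        nlinarith [pow_nonneg (by linarith : (0 : ℝ) ≤ K) 5, sq_nonneg w]
    _ ≤ (√(6 * K ^ 5) * (u + w)) ^ 2 := by
        rw [mul_pow, Real.sq_sqrt (by positivity)]
        gcongr
        nlinarith [mul_nonneg hu hw']

theorem norm_exp_neg_I_mul_ofReal (t r : ℝ) : ‖Complex.exp (-Complex.I * t * r)‖ = 1 := by
  rw [Complex.norm_exp]; simp

theorem stmt16_general (ε K s γ : ℝ) (hε : 0 < ε) (hK : 1 ≤ K) :
    ∃ C > 0, ∀ (N N₁ N₂ t sgn : ℝ), sgn = 1 ∨ sgn = -1 →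
      1 ≤ N₂ → N₂ ≤ N → N / K ≤ N₁ → N₁ ≤ K * N → 1 ≤ N₁ →
      ∀ h : ℤ × ℤ → ℤ × ℤ → ℤ × ℤ → ℂ,
      (∀ n n₁ n₂ : ℤ × ℤ, h n n₁ n₂ =
        if n₁ = n₂ - n ∧ |phaseFn sgn n₁ n₂ n| ≤ K * N₁ ^ (2 * s + 2 * γ) ∧
           N / K ≤ en2 n ∧ en2 n ≤ K * N ∧ N₁ / K ≤ en2 n₁ ∧ en2 n₁ ≤ K * N₁ ∧
           N₂ / K ≤ en2 n₂ ∧ en2 n₂ ≤ K * N₂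
        then Complex.exp (-(Complex.I) * (t : ℂ) * (((n₁.1 : ℝ) ^ 2 + (n₁.2 : ℝ) ^ 2 : ℝ) : ℂ))
              * ((jb2 n₁ : ℝ) : ℂ)⁻¹
        else 0) →
      ∀ (f : (ℤ × ℤ) × (ℤ × ℤ) →₀ ℂ) (T : Finset (ℤ × ℤ)),
        ∑ n₂ ∈ T, ‖∑ p ∈ f.support, h p.2 p.1 n₂ * f p‖ ^ 2 ≤
          (C * (N₁ ^ (s + γ - 1 / 2 + ε) * N₂ ^ (-(1 : ℝ) / 2) +
            N₁ ^ (-(1 : ℝ) / 2 + ε))) ^ 2 * ∑ p ∈ f.support, ‖f p‖ ^ 2 := by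
  refine ⟨√(6 * K ^ 5), by positivity, ?_⟩
  intro N N₁ N₂ t sgn _ hN₂ _ _ _ hN₁ h hh f T
  have hK₀ : 0 < K := by linarith
  have hsupp := fun n n₁ n₂ (hne : h n n₁ n₂ ≠ 0) => (ite_ne_right_iff.1 (hh n n₁ n₂ ▸ hne)).1
  have hentry : ∀ n n₁ n₂, ‖h n n₁ n₂‖ ≤ K / N₁ := fun n n₁ n₂ => by
    rw [hh]
    split_ifs with hc
    · have hjb : N₁ / K ≤ jb2 n₁ := hc.2.2.2.2.1.trans (en2_le_jb2 n₁)
      rw [norm_mul, norm_exp_neg_I_mul_ofReal, one_mul, norm_inv, Complex.norm_real,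
        Real.norm_of_nonneg ((by positivity : 0 ≤ N₁ / K).trans hjb), ← inv_div]
      exact inv_anti₀ (by positivity) hjb
    · rw [norm_zero]; positivity
  refine (sum_norm_sq_sum_mul_le (fun n₂ p => h p.2 p.1 n₂) f f.support T (a := K / N₁)
    (R := (2 * (K * N₁) + 1) * (2 * (K * N₁ ^ (2 * s + 2 * γ)) / (N₂ / K) + 1))
    (by positivity) (fun _ _ => hentry _ _ _) (fun n₂ => ?_) (fun p k k' hk hk' => ?_)).trans ?_
  · refine card_le_of_abs_phaseFn_le _ n₂ (sgn := sgn) (by positivity) (by positivity)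
      (by positivity) fun p hp => ?_
    obtain ⟨h₁, hφ, -, -, -, hn₁, hn₂, -⟩ := hsupp _ _ _ (mem_filter.1 hp).2
    exact ⟨h₁, hn₁, hφ, hn₂⟩
  · exact sub_left_injective ((hsupp _ _ _ hk).1.symm.trans (hsupp _ _ _ hk').1)
  · gcongr
    exact entry_sq_mul_row_count_le hK hN₁ (by linarith) hε.le

/-- First deterministic tensor estimate: for the tensor
`h(n,n₁,n₂) = e^{-it|n₁|²} 1_{n₁ = n₂−n} 1_{|φ| ≲ N₁^{2s+2γ}} ⟨n₁⟩^{-1}`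
(localized to `|n| ∼ N`, `|n₁| ∼ N₁`, `|n₂| ∼ N₂` with `N₁ ∼ N ≫ N₂` and
`2s + 2γ < 1`), the operator norm `‖h‖_{n₁ n → n₂}` is bounded by
`C (N₁^{s+γ−1/2+ε} N₂^{-1/2} + N₁^{-1/2+ε})`, stated via finitely supported
inputs and finite partial output sums. -/
theorem stmt16 (ε K s γ : ℝ) (hε : 0 < ε) (hK : 1 ≤ K) (hs : 0 ≤ s) (hγ : 0 ≤ γ)
    (hsγ : 2 * s + 2 * γ < 1) :
    ∃ C > 0, ∀ (N N₁ N₂ t sgn : ℝ), sgn = 1 ∨ sgn = -1 →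
      1 ≤ N₂ → N₂ ≤ N → N / K ≤ N₁ → N₁ ≤ K * N → 1 ≤ N₁ →
      ∀ h : ℤ × ℤ → ℤ × ℤ → ℤ × ℤ → ℂ,
      (∀ n n₁ n₂ : ℤ × ℤ, h n n₁ n₂ =
        if n₁ = n₂ - n ∧ |phaseFn sgn n₁ n₂ n| ≤ K * N₁ ^ (2 * s + 2 * γ) ∧
           N / K ≤ en2 n ∧ en2 n ≤ K * N ∧ N₁ / K ≤ en2 n₁ ∧ en2 n₁ ≤ K * N₁ ∧
           N₂ / K ≤ en2 n₂ ∧ en2 n₂ ≤ K * N₂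
        then Complex.exp (-(Complex.I) * (t : ℂ) * (((n₁.1 : ℝ) ^ 2 + (n₁.2 : ℝ) ^ 2 : ℝ) : ℂ))
              * ((jb2 n₁ : ℝ) : ℂ)⁻¹
        else 0) →
      ∀ (f : (ℤ × ℤ) × (ℤ × ℤ) →₀ ℂ) (T : Finset (ℤ × ℤ)),
        ∑ n₂ ∈ T, ‖∑ p ∈ f.support, h p.2 p.1 n₂ * f p‖ ^ 2 ≤
          (C * (N₁ ^ (s + γ - 1 / 2 + ε) * N₂ ^ (-(1 : ℝ) / 2) +
            N₁ ^ (-(1 : ℝ) / 2 + ε))) ^ 2 * ∑ p ∈ f.support, ‖f p‖ ^ 2 :=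
  stmt16_general ε K s γ hε hK
end
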